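/- arXiv:1704.03212 — 8 statements merged into one kernel-verified Lean document; each statement's English description precedes it below -/
import Mathlib

section
/- Let E be a finite-dimensional real inner product space and let 𝒰 and 𝒱 be subspaces of E. Let 𝒵 = (id − P_𝒱)(𝒰) denote the image of 𝒰 under id − P_𝒱. Then P_{𝒰 + 𝒱} − P_𝒱 = P_𝒵 (equivalently, for matrices U, V with the same number of rows and W = [U V] their column concatenation, P_W − P_V = P_Z where Z = (I − P_V)U and P_A denotes the orthogonal projection onto the column space of A). -/
/-!
Since `(id − P_𝒱) u = u − P_𝒱 u` with `P_𝒱 u ∈ 𝒱`, the subspace `𝒵` is orthogonal to `𝒱` and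
`𝒵 + 𝒱 = 𝒰 + 𝒱`. The projection onto the sum of two orthogonal subspaces is the sum of the two
projections, so `P_{𝒰 + 𝒱} = P_{𝒵 + 𝒱} = P_𝒵 + P_𝒱`.
-/

noncomputable def projSub {E : Type*} [NormedAddCommGroup E] [InnerProductSpace ℝ E]
    [FiniteDimensional ℝ E] (S : Submodule ℝ E) : E →L[ℝ] E :=
  S.subtypeL.comp (Submodule.orthogonalProjection S)

namespace Submodule

theorem map_sup_eq_sup_of_sub_mem {R M : Type*} [Ring R] [AddCommGroup M] [Module R M]
    {U V : Submodule R M} {g : M →ₗ[R] M} (hg : ∀ x, x - g x ∈ V) :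
    U.map g ⊔ V = U ⊔ V := by
  apply le_antisymm <;> refine sup_le ?_ le_sup_right
  · rintro _ ⟨u, hu, rfl⟩
    rw [← sub_sub_cancel u (g u)]
    exact sub_mem (mem_sup_left hu) (mem_sup_right (hg u))
  · intro u hu
    rw [← add_sub_cancel (g u) u]
    exact add_mem (mem_sup_left (mem_map_of_mem hu)) (mem_sup_right (hg u))

variable {𝕜 E : Type*} [RCLike 𝕜] [NormedAddCommGroup E] [InnerProductSpace 𝕜 E]

theorem isOrtho_map_sub_starProjection (U V : Submodule 𝕜 E) [V.HasOrthogonalProjection] :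
    U.map ((ContinuousLinearMap.id 𝕜 E - V.starProjection : E →L[𝕜] E) : E →ₗ[𝕜] E) ⟂ V := by
  rw [isOrtho_iff_le]
  rintro _ ⟨u, -, rfl⟩
  exact V.sub_starProjection_mem_orthogonal u

theorem IsOrtho.starProjection_sup {U V : Submodule 𝕜 E} [U.HasOrthogonalProjection]
    [V.HasOrthogonalProjection] [(U ⊔ V).HasOrthogonalProjection] (h : U ⟂ V) :
    (U ⊔ V).starProjection = U.starProjection + V.starProjection := by
  ext x
  refine eq_starProjection_of_mem_orthogonal
    (add_mem (mem_sup_left (U.starProjection_apply_mem x))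
      (mem_sup_right (V.starProjection_apply_mem x))) ?_
  rw [← inf_orthogonal, mem_inf, add_apply, ← sub_sub]
  constructor
  · exact sub_mem (U.sub_starProjection_mem_orthogonal x) (h.symm (V.starProjection_apply_mem x))
  · rw [sub_right_comm]
    exact sub_mem (V.sub_starProjection_mem_orthogonal x) (h (U.starProjection_apply_mem x))

end Submodule

theorem projSub_eq_starProjection {E : Type*} [NormedAddCommGroup E] [InnerProductSpace ℝ E]
    [FiniteDimensional ℝ E] (S : Submodule ℝ E) : projSub S = S.starProjection :=
  rfl

/-- For subspaces `𝒰, 𝒱` of a finite-dimensional real inner product space and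
`𝒵 = (id − P_𝒱)(𝒰)`, one has `P_{𝒰 + 𝒱} − P_𝒱 = P_𝒵`. -/
theorem projSub_sup_sub_projSub {E : Type*} [NormedAddCommGroup E]
    [InnerProductSpace ℝ E] [FiniteDimensional ℝ E] (U V : Submodule ℝ E) :
    projSub (U ⊔ V) - projSub V =
      projSub (Submodule.map ((ContinuousLinearMap.id ℝ E - projSub V : E →L[ℝ] E) : E →ₗ[ℝ] E) U) := by
  simp only [projSub_eq_starProjection]
  have hZV := U.isOrtho_map_sub_starProjection V
  have hsup : U.map ((ContinuousLinearMap.id ℝ E - V.starProjection : E →L[ℝ] E) : E →ₗ[ℝ] E) ⊔ V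
      = U ⊔ V :=
    Submodule.map_sup_eq_sup_of_sub_mem fun x ↦ by simp
  rw [← hsup, hZV.starProjection_sup, add_sub_cancel_right]
end

section
/- Let B be a blocked plan for an s^m experiment with b blocks of size k over F, let V be a vector subspace of F^m, and let a, b ∈ F^m. Then the E_a-versus-E_b incidence matrix of the expansion V(B) satisfies ñ^{ab}_{α,β} = Σ_{v ∈ V} n^{ab}_{α − a·v, β − b·v} for all α, β ∈ F, where n^{ab} are the incidence numbers of the original plan B. -/
open Matrix

/-- The `E_a`-versus-`E_c` incidence matrix of a blocked plan:
entry `(α, β)` counts the runs at level `α` of `E_a` and level `β` of `E_c`. -/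
def incNN {m k : ℕ} {F : Type*} [Field F] [Fintype F] [DecidableEq F]
    {J : Type*} [Fintype J] (B : J → Fin k → (Fin m → F)) (a c : Fin m → F) :
    Matrix F F ℕ := fun α β =>
  (Finset.univ.filter (fun ju : J × Fin k =>
    (∑ i, a i * B ju.1 ju.2 i) = α ∧ (∑ i, c i * B ju.1 ju.2 i) = β)).card

/-- The `E_a`-versus-block incidence matrix of a blocked plan:
entry `(α, j)` counts the runs of block `j` at level `α` of `E_a`. -/
def incBlk {m k : ℕ} {F : Type*} [Field F] [Fintype F] [DecidableEq F]
    {J : Type*} [Fintype J] (B : J → Fin k → (Fin m → F)) (a : Fin m → F) :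
    Matrix F J ℕ := fun α j =>
  (Finset.univ.filter (fun u : Fin k => (∑ i, a i * B j u i) = α)).card

/-- The replication vector of the effect `E_a`: `r^a_α` counts the runs
of the whole plan at level `α` of `E_a`. -/
def replV {m k : ℕ} {F : Type*} [Field F] [Fintype F] [DecidableEq F]
    {J : Type*} [Fintype J] (B : J → Fin k → (Fin m → F)) (a : Fin m → F) :
    F → ℕ := fun α =>
  (Finset.univ.filter (fun ju : J × Fin k => (∑ i, a i * B ju.1 ju.2 i) = α)).card

/-- The expansion `V(B)` of a blocked plan `B` along a subspace `V`: its blocks are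
indexed by pairs `(j, v)`, and block `(j, v)` consists of the runs `v + B j u`. -/
def expandPlan {m k : ℕ} {F : Type*} [Field F] {J : Type*}
    (B : J → Fin k → (Fin m → F)) (V : Submodule F (Fin m → F)) :
    (J × V) → Fin k → (Fin m → F) :=
  fun jv u => (jv.2 : Fin m → F) + B jv.1 u

section Incidence

variable {m k : ℕ} {F : Type*} [Field F] [Fintype F] [DecidableEq F]

theorem incNN_const_add {J : Type*} [Fintype J] (B : J → Fin k → (Fin m → F))
    (v a c : Fin m → F) (α β : F) :
    incNN (fun j u => v + B j u) a c α β = incNN B a c (α - a ⬝ᵥ v) (β - c ⬝ᵥ v) := by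
  simp only [incNN, dotProduct, Pi.add_apply, mul_add, Finset.sum_add_distrib, eq_sub_iff_add_eq']

theorem incNN_prod_eq_sum {J I : Type*} [Fintype J] [Fintype I]
    (B : J × I → Fin k → (Fin m → F)) (a c : Fin m → F) (α β : F) :
    incNN B a c α β = ∑ i, incNN (fun j => B (j, i)) a c α β := by
  simp only [incNN, Finset.card_filter, Fintype.sum_prod_type]
  exact Finset.sum_comm

end Incidence

/-- The incidence matrix `Ñ^{ac}` of the expansion `V(B)` satisfies
`ñ^{ac}_{α,β} = Σ_{v ∈ V} n^{ac}_{α − a·v, β − c·v}`. -/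
theorem incNN_expandPlan {m k b : ℕ} {F : Type*} [Field F] [Fintype F] [DecidableEq F]
    (B : Fin b → Fin k → (Fin m → F)) (V : Submodule F (Fin m → F))
    [DecidablePred (· ∈ V)] (a c : Fin m → F) (α β : F) :
    incNN (expandPlan B V) a c α β =
      ∑ v : V, incNN B a c (α - ∑ i, a i * (v : Fin m → F) i)
        (β - ∑ i, c i * (v : Fin m → F) i) := by
  rw [incNN_prod_eq_sum]
  exact Finset.sum_congr rfl fun v _ => incNN_const_add B v a c α β
end

section
/- Let B be a blocked plan for an s^m experiment with b blocks of size k over F, let V be a vector subspace of F^m, and let a, b ∈ F^m. Then for all α, β ∈ F, the (α,β) entry of L̃^a (L̃^b)ᵀ for the expansion V(B) equals Σ_{v ∈ V} (L^a (L^b)ᵀ)_{α − a·v, β − b·v}, where L^a, L^b are the effect-versus-block incidence matrices of the original plan B. -/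
open Matrix

/-- The `(α,β)` entry of `L̃^a (L̃^c)ᵀ` for the expansion `V(B)` equals
`Σ_{v ∈ V} (L^a (L^c)ᵀ)_{α − a·v, β − c·v}`. -/
theorem incBlk_mul_transpose_expandPlan {m k b : ℕ} {F : Type*} [Field F] [Fintype F]
    [DecidableEq F] (B : Fin b → Fin k → (Fin m → F)) (V : Submodule F (Fin m → F))
    [DecidablePred (· ∈ V)] (a c : Fin m → F) (α β : F) :
    (incBlk (expandPlan B V) a * (incBlk (expandPlan B V) c)ᵀ) α β =
      ∑ v : V, (incBlk B a * (incBlk B c)ᵀ)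
        (α - ∑ i, a i * (v : Fin m → F) i) (β - ∑ i, c i * (v : Fin m → F) i) := by
  have key : ∀ (j : Fin b) (v : V) (e : Fin m → F) (γ : F),
      incBlk (expandPlan B V) e γ (j, v)
        = incBlk B e (γ - ∑ i, e i * (v : Fin m → F) i) j := by
    intro j v e γ
    unfold incBlk expandPlan
    congr 1
    apply Finset.filter_congr
    intro u _
    simp [mul_add, Finset.sum_add_distrib, eq_sub_iff_add_eq']
  simp only [Matrix.mul_apply, Matrix.transpose_apply]
  rw [Fintype.sum_prod_type, Finset.sum_comm]
  refine Finset.sum_congr rfl fun v _ => Finset.sum_congr rfl fun j _ => ?_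
  rw [key, key]
end

section
/- If a ∈ V^⊥ and b ∉ V^⊥, then m̃_{α,β} = s^{t−1} · Σ_{γ ∈ F} m_{α,γ} for all α, β ∈ F; symmetrically, if a ∉ V^⊥ and b ∈ V^⊥, then m̃_{α,β} = s^{t−1} · Σ_{γ ∈ F} m_{γ,β} for all α, β ∈ F. -/
/-- The orthocomplement `V^⊥ = {w : w·v = 0 for all v ∈ V}` of a subspace `V` of `F^m`
with respect to the dot product `w·v = Σ_i w_i v_i`. -/
def dotPerp {m : ℕ} {F : Type*} [Field F] (V : Submodule F (Fin m → F)) :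
    Submodule F (Fin m → F) where
  carrier := {w | ∀ v ∈ V, ∑ i, w i * v i = 0}
  zero_mem' := by intro v hv; simp
  add_mem' := by
    intro x y hx hy v hv
    simp only [Set.mem_setOf_eq] at hx hy
    simp only [Pi.add_apply, add_mul, Finset.sum_add_distrib, hx v hv, hy v hv, add_zero]
  smul_mem' := by
    intro c x hx v hv
    simp only [Set.mem_setOf_eq] at hx
    simp only [Pi.smul_apply, smul_eq_mul, mul_assoc, ← Finset.mul_sum, hx v hv, mul_zero]

/-- Given `a, b ∈ F^m` and an `s×s` real matrix `M` indexed by `F`, the matrix `M̃` with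
`m̃_{α,β} = Σ_{v ∈ V} m_{α − a·v, β − b·v}`. -/
def tildeMat {m : ℕ} {F : Type*} [Field F] [Fintype F] [DecidableEq F]
    (V : Submodule F (Fin m → F)) [DecidablePred (· ∈ V)]
    (a b : Fin m → F) (M : Matrix F F ℝ) : Matrix F F ℝ := fun α β =>
  ∑ v : V, M (α - ∑ i, a i * (v : Fin m → F) i) (β - ∑ i, b i * (v : Fin m → F) i)

lemma fiber_sum {m t : ℕ} {F : Type*} [Field F] [Fintype F] [DecidableEq F]
    (V : Submodule F (Fin m → F)) [DecidablePred (· ∈ V)]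
    (ht : Module.finrank F V = t)
    (b : Fin m → F) (hb : b ∉ dotPerp V) (f : F → ℝ) :
    ∑ v : V, f (∑ i, b i * (v : Fin m → F) i)
      = (Fintype.card F : ℝ) ^ (t - 1) * ∑ c : F, f c := by
  classical
  set φ : V →ₗ[F] F :=
    { toFun := fun v => ∑ i, b i * (v : Fin m → F) i
      map_add' := by
        intro x y
        simp [mul_add, Finset.sum_add_distrib]
      map_smul' := by
        intro c x
        simp [Finset.mul_sum, mul_left_comm] } with hφ
  have hb' : ∃ v ∈ V, ∑ i, b i * v i ≠ 0 := by
    by_contra h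
    push_neg at h
    exact hb h
  obtain ⟨v0, hv0V, hv0⟩ := hb'
  have hsurj : Function.Surjective φ := by
    intro c
    refine ⟨(c / (∑ i, b i * v0 i)) • ⟨v0, hv0V⟩, ?_⟩
    simp only [hφ, LinearMap.coe_mk, AddHom.coe_mk, map_smul]
    simp only [map_smul, smul_eq_mul]
    show c / (∑ i, b i * v0 i) * (∑ i, b i * v0 i) = c
    exact div_mul_cancel₀ c hv0
  have hkercard : Fintype.card (LinearMap.ker φ) = Fintype.card F ^ (t - 1) := by
    have h1 : Module.finrank F (LinearMap.range φ) = 1 := by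
      rw [LinearMap.range_eq_top.mpr hsurj, finrank_top, Module.finrank_self]
    have h2 := LinearMap.finrank_range_add_finrank_ker φ
    rw [h1, ht] at h2
    have hker : Module.finrank F (LinearMap.ker φ) = t - 1 := by omega
    rw [Module.card_eq_pow_finrank (K := F), hker]
  have key : ∀ c : F, (Finset.univ.filter fun v : V => φ v = c).card
      = Fintype.card F ^ (t - 1) := by
    intro c
    obtain ⟨w0, hw0⟩ := hsurj c
    rw [← Fintype.card_subtype, ← hkercard]
    apply Fintype.card_congr
    refine
      { toFun := fun x => ⟨x.1 - w0, by
          have := x.2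
          simp only [LinearMap.mem_ker, map_sub, this, hw0, sub_self]⟩
        invFun := fun k => ⟨k.1 + w0, by
          have := k.2
          simp only [LinearMap.mem_ker] at this
          simp [map_add, this, hw0]⟩
        left_inv := fun x => by simp
        right_inv := fun k => by simp }
  calc ∑ v : V, f (∑ i, b i * (v : Fin m → F) i)
      = ∑ v : V, f (φ v) := rfl
    _ = ∑ c : F, ∑ v ∈ Finset.univ.filter fun v : V => φ v = c, f c :=
        (Finset.sum_fiberwise' Finset.univ φ f).symm
    _ = ∑ c : F, (Fintype.card F : ℝ) ^ (t - 1) * f c := by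
        simp [Finset.sum_const, key, nsmul_eq_mul]
    _ = _ := by rw [← Finset.mul_sum]


/-- If `a ∈ V^⊥` and `b ∉ V^⊥`, then `m̃_{α,β} = s^{t−1} · Σ_γ m_{α,γ}`; symmetrically,
if `a ∉ V^⊥` and `b ∈ V^⊥`, then `m̃_{α,β} = s^{t−1} · Σ_γ m_{γ,β}`. -/
theorem tildeMat_of_one_mem_perp {m s t : ℕ} {F : Type*} [Field F] [Fintype F]
    [DecidableEq F] (hs : Fintype.card F = s)
    (V : Submodule F (Fin m → F)) [DecidablePred (· ∈ V)]
    (ht : Module.finrank F V = t)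
    (a b : Fin m → F) (M : Matrix F F ℝ) :
    (a ∈ dotPerp V → b ∉ dotPerp V → ∀ α β : F,
      tildeMat V a b M α β = (s : ℝ) ^ (t - 1) * ∑ γ : F, M α γ) ∧
    (a ∉ dotPerp V → b ∈ dotPerp V → ∀ α β : F,
      tildeMat V a b M α β = (s : ℝ) ^ (t - 1) * ∑ γ : F, M γ β) := by
  constructor
  · intro ha hb α β
    have h1 : tildeMat V a b M α β
        = ∑ v : V, (fun c => M α (β - c)) (∑ i, b i * (v : Fin m → F) i) := by
      apply Finset.sum_congr rfl
      intro v _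
      simp [ha v.1 v.2]
    rw [h1, fiber_sum V ht b hb (fun c => M α (β - c)), hs]
    congr 1
    exact Equiv.sum_comp (Equiv.subLeft β) (M α)
  · intro ha hb α β
    have h1 : tildeMat V a b M α β
        = ∑ v : V, (fun c => M (α - c) β) (∑ i, a i * (v : Fin m → F) i) := by
      apply Finset.sum_congr rfl
      intro v _
      simp [hb v.1 v.2]
    rw [h1, fiber_sum V ht a ha (fun c => M (α - c) β), hs]
    congr 1
    exact Equiv.sum_comp (Equiv.subLeft α) (fun γ => M γ β)
end

section
/- If a ∉ V^⊥, b ∉ V^⊥ and span{a} + V^⊥ ≠ span{b} + V^⊥ (as subspaces of F^m), then M̃ = c · s^{t−2} · J, where c = Σ_{γ,δ ∈ F} m_{γ,δ} is the sum of all entries of M and J is the s×s all-ones matrix. -/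
/-- The linear map `v ↦ (a·v, b·v)` on `V`. -/
def pairMap {m : ℕ} {F : Type*} [Field F] [Fintype F] [DecidableEq F]
    (V : Submodule F (Fin m → F)) (a b : Fin m → F) : V →ₗ[F] F × F where
  toFun v := (∑ i, a i * (v : Fin m → F) i, ∑ i, b i * (v : Fin m → F) i)
  map_add' v w := by
    simp [Prod.ext_iff, mul_add, Finset.sum_add_distrib]
  map_smul' c v := by
    simp [Prod.ext_iff, Finset.mul_sum, mul_left_comm, Prod.smul_def]

/-- If `a ∉ V^⊥`, `b ∉ V^⊥` and `span{a} + V^⊥ ≠ span{b} + V^⊥`, then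
`M̃ = c·s^{t−2}·J` where `c` is the sum of all entries of `M`. -/
theorem tildeMat_of_ne_classes {m s t : ℕ} {F : Type*} [Field F] [Fintype F]
    [DecidableEq F] (hs : Fintype.card F = s)
    (V : Submodule F (Fin m → F)) [DecidablePred (· ∈ V)]
    (ht : Module.finrank F V = t)
    (a b : Fin m → F) (M : Matrix F F ℝ)
    (ha : a ∉ dotPerp V) (hb : b ∉ dotPerp V)
    (hab : Submodule.span F {a} ⊔ dotPerp V ≠ Submodule.span F {b} ⊔ dotPerp V) :
    ∀ α β : F, tildeMat V a b M α β = (∑ γ : F, ∑ δ : F, M γ δ) * (s : ℝ) ^ (t - 2) := by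
  classical
  set L := pairMap V a b with hL
  -- surjectivity
  have hsurj : Function.Surjective L := by
    rw [← LinearMap.range_eq_top]
    by_contra hne
    obtain ⟨φ, hφ0, hφ⟩ := (LinearMap.range L).exists_dual_map_eq_bot_of_lt_top
      (lt_top_iff_ne_top.mpr hne) inferInstance
    set c := φ (1, 0) with hc
    set d := φ (0, 1) with hd
    have hφeq : ∀ x y : F, φ (x, y) = x * c + y * d := by
      intro x y
      have hxy : (x, y) = x • ((1 : F), (0 : F)) + y • ((0 : F), (1 : F)) := by
        simp [Prod.ext_iff]
      rw [hxy, map_add, map_smul, map_smul, smul_eq_mul, smul_eq_mul]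
    have hker : ∀ v : V, φ (L v) = 0 := by
      intro v
      have hmem : φ (L v) ∈ (LinearMap.range L).map φ := ⟨L v, ⟨v, rfl⟩, rfl⟩
      rwa [hφ, Submodule.mem_bot] at hmem
    have hmem : c • a + d • b ∈ dotPerp V := by
      intro v hv
      have h1 := hker ⟨v, hv⟩
      rw [hL] at h1
      simp only [pairMap, LinearMap.coe_mk, AddHom.coe_mk] at h1
      rw [hφeq] at h1
      calc ∑ i, (c • a + d • b) i * v i
          = (∑ i, a i * v i) * c + (∑ i, b i * v i) * d := by
            simp only [Pi.add_apply, Pi.smul_apply, smul_eq_mul, add_mul,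
              Finset.sum_add_distrib, Finset.sum_mul, Finset.mul_sum]
            congr 1 <;> exact Finset.sum_congr rfl fun i _ => by ring
        _ = 0 := h1
    have hcd : c ≠ 0 ∨ d ≠ 0 := by
      by_contra h
      push_neg at h
      apply hφ0
      refine LinearMap.ext fun p => ?_
      obtain ⟨x, y⟩ := p
      rw [hφeq, h.1, h.2]
      simp
    by_cases hdz : d = 0
    · have hcz : c ≠ 0 := by tauto
      apply ha
      have : c • a ∈ dotPerp V := by simpa [hdz] using hmem
      have := (dotPerp V).smul_mem c⁻¹ this
      rwa [smul_smul, inv_mul_cancel₀ hcz, one_smul] at this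
    by_cases hcz : c = 0
    · apply hb
      have : d • b ∈ dotPerp V := by simpa [hcz] using hmem
      have := (dotPerp V).smul_mem d⁻¹ this
      rwa [smul_smul, inv_mul_cancel₀ hdz, one_smul] at this
    · apply hab
      have hamem : a ∈ Submodule.span F {a} ⊔ dotPerp V :=
        Submodule.mem_sup_left (Submodule.mem_span_singleton_self a)
      have hbmem : b ∈ Submodule.span F {b} ⊔ dotPerp V :=
        Submodule.mem_sup_left (Submodule.mem_span_singleton_self b)
      have hba : b ∈ Submodule.span F {a} ⊔ dotPerp V := by
        have h1 : d • b = (c • a + d • b) - c • a := by abel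
        have h2 : d • b ∈ Submodule.span F {a} ⊔ dotPerp V := by
          rw [h1]
          exact Submodule.sub_mem _ (Submodule.mem_sup_right hmem)
            (Submodule.smul_mem _ _ hamem)
        have := Submodule.smul_mem _ d⁻¹ h2
        rwa [smul_smul, inv_mul_cancel₀ hdz, one_smul] at this
      have hab' : a ∈ Submodule.span F {b} ⊔ dotPerp V := by
        have h1 : c • a = (c • a + d • b) - d • b := by abel
        have h2 : c • a ∈ Submodule.span F {b} ⊔ dotPerp V := by
          rw [h1]
          exact Submodule.sub_mem _ (Submodule.mem_sup_right hmem)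
            (Submodule.smul_mem _ _ hbmem)
        have := Submodule.smul_mem _ c⁻¹ h2
        rwa [smul_smul, inv_mul_cancel₀ hcz, one_smul] at this
      refine le_antisymm (sup_le ?_ le_sup_right) (sup_le ?_ le_sup_right)
      · rwa [Submodule.span_le, Set.singleton_subset_iff]
      · rwa [Submodule.span_le, Set.singleton_subset_iff]
  -- rank-nullity
  have hrank : 2 + Module.finrank F (LinearMap.ker L) = t := by
    have h1 := LinearMap.finrank_range_add_finrank_ker L
    rw [LinearMap.range_eq_top.mpr hsurj] at h1
    rw [← ht, ← h1]
    congr 1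
    simp [Module.finrank_prod]
  have ht2 : 2 ≤ t := by omega
  have hker_card : Fintype.card (LinearMap.ker L) = s ^ (t - 2) := by
    rw [Module.card_eq_pow_finrank (K := F), hs]
    congr 1
    omega
  -- fiber cardinality
  have hfiber : ∀ y : F × F, (Finset.univ.filter (fun v : V => L v = y)).card = s ^ (t - 2) := by
    intro y
    obtain ⟨v₀, hv₀⟩ := hsurj y
    rw [← Fintype.card_subtype, ← hker_card]
    have e : LinearMap.ker L ≃ {v : V // L v = y} :=
      { toFun := fun w => ⟨w.1 + v₀, by
          rw [map_add, LinearMap.mem_ker.mp w.2, hv₀, zero_add]⟩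
        invFun := fun v => ⟨v.1 - v₀, LinearMap.mem_ker.mpr (by
          rw [map_sub, v.2, hv₀, sub_self])⟩
        left_inv := fun w => by
          apply Subtype.ext; apply Subtype.ext; simp
        right_inv := fun v => by
          apply Subtype.ext; apply Subtype.ext; simp }
    exact Fintype.card_congr e.symm
  intro α β
  have hstep : tildeMat V a b M α β = ∑ v : V, M (α - (L v).1) (β - (L v).2) := by
    rfl
  rw [hstep, ← Finset.sum_fiberwise Finset.univ L (fun v : V => M (α - (L v).1) (β - (L v).2))]
  have hstep2 : ∀ y : F × F,
      ∑ v ∈ Finset.univ.filter (fun v : V => L v = y), M (α - (L v).1) (β - (L v).2)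
      = (s : ℝ) ^ (t - 2) * M (α - y.1) (β - y.2) := by
    intro y
    calc ∑ v ∈ Finset.univ.filter (fun v : V => L v = y), M (α - (L v).1) (β - (L v).2)
        = ∑ _v ∈ Finset.univ.filter (fun v : V => L v = y), M (α - y.1) (β - y.2) :=
          Finset.sum_congr rfl fun v hv => by rw [(Finset.mem_filter.mp hv).2]
      _ = (s : ℝ) ^ (t - 2) * M (α - y.1) (β - y.2) := by
          rw [Finset.sum_const, hfiber y, nsmul_eq_mul]
          push_cast
          ring
  rw [Finset.sum_congr rfl (fun y _ => hstep2 y), ← Finset.mul_sum]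
  have hre : ∑ y : F × F, M (α - y.1) (β - y.2) = ∑ γ : F, ∑ δ : F, M γ δ := by
    rw [Fintype.sum_prod_type]
    rw [← Equiv.sum_comp (Equiv.subLeft α) (fun γ => ∑ δ : F, M γ δ)]
    refine Finset.sum_congr rfl fun γ _ => ?_
    rw [← Equiv.sum_comp (Equiv.subLeft β) (fun δ => M (Equiv.subLeft α γ) δ)]
    rfl
  rw [hre, mul_comm]
end

section
/- Let B be a blocked plan for an s^m experiment with b blocks of size k over F, let V be a vector subspace of F^m, and let a, b ∈ F^m be nonzero. If span{a} + V^⊥ ≠ span{b} + V^⊥ (as subspaces of F^m), i.e. the effects E_a and E_b lie in different effect classes relative to V, then E_a and E_b are orthogonal through the block factor in the expansion V(B): k·Ñ^{ab} = L̃^a·(L̃^b)ᵀ. -/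
open Matrix

/-!
If some `w ∈ V` has `a·w = 1` and `c·w = 0`, translating by `s • w` shifts the `E_a`-level of
every point of `V` by `s` and fixes its `E_c`-level. So the number of `v ∈ V` at levels
`(s, t)` does not depend on `s`. Within one block `j` of the expansion, this makes the
`E_a`- and `E_c`-levels of the runs `v + B j u` behave independently, which is the block-wise
identity `k·Ñ = L̃^a (L̃^c)ᵀ`. Such a `w` exists exactly when `a` restricted to `V` is not a
multiple of `c` restricted to `V`, i.e. `a ∉ span{c} + V^⊥`. If `a` and `c` lie in different
classes, this holds for `a` or for `c`, and OTB is symmetric in the two effects.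
-/

open Finset

section LevelCounts

variable {V ι F : Type*} [Fintype V] [Fintype ι] [AddCommGroup F] [DecidableEq F]

theorem card_mul_card_filter_add_eq_sum_card_mul_card (φ ψ : V → F) (p q : ι → F)
    (hshift : ∀ s t, #{v | φ v = s ∧ ψ v = t} = #{v | φ v = 0 ∧ ψ v = t}) (α β : F) :
    Fintype.card ι * #{x : V × ι | φ x.1 + p x.2 = α ∧ ψ x.1 + q x.2 = β} =
      ∑ v, #{u | φ v + p u = α} * #{u | ψ v + q u = β} := by
  set N : F → F → ℕ := fun s t => #{v | φ v = s ∧ ψ v = t}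
  have hN : ∀ s t, N s t = N 0 t := hshift
  have hcount : ∀ s t, N s t = ∑ v, if φ v = s ∧ ψ v = t then 1 else 0 := fun s t =>
    card_filter _ _
  calc Fintype.card ι * #{x : V × ι | φ x.1 + p x.2 = α ∧ ψ x.1 + q x.2 = β}
      = Fintype.card ι * ∑ u, N (α - p u) (β - q u) := by
        simp only [hcount, card_filter, Fintype.sum_prod_type, eq_sub_iff_add_eq]
        rw [Finset.sum_comm]
    _ = ∑ _u : ι, ∑ u', N 0 (β - q u') := by
        simp only [hN, sum_const, card_univ, smul_eq_mul]
    _ = ∑ u, ∑ u', N (α - p u) (β - q u') := by simp only [hN]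
    _ = ∑ v, #{u | φ v + p u = α} * #{u | ψ v + q u = β} := by
        simp only [hcount, card_filter, sum_mul_sum, ite_zero_mul_ite_zero, mul_one,
          eq_sub_iff_add_eq]
        exact (sum_congr rfl fun _ _ => sum_comm).trans sum_comm

end LevelCounts

section Expansion

variable {m k : ℕ} {F : Type*} [Field F] [Fintype F] [DecidableEq F]

def IsOTB {J : Type*} [Fintype J] (B : J → Fin k → (Fin m → F)) (a c : Fin m → F) : Prop :=
  k • incNN B a c = incBlk B a * (incBlk B c)ᵀ

variable {J : Type*} [Fintype J] {B : J → Fin k → (Fin m → F)} {a c : Fin m → F}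

theorem incNN_transpose : (incNN B a c)ᵀ = incNN B c a := by
  ext β α
  simp only [transpose_apply, incNN, and_comm]

theorem IsOTB.symm (h : IsOTB B a c) : IsOTB B c a := by
  rw [IsOTB, ← incNN_transpose, ← transpose_smul, h, transpose_mul, transpose_transpose]

theorem card_dotProduct_levels_eq_card_zero_level {V : Submodule F (Fin m → F)} [DecidablePred (· ∈ V)]
    {w : Fin m → F} (hw : w ∈ V) (hwa : a ⬝ᵥ w = 1) (hwc : c ⬝ᵥ w = 0) (s t : F) :
    #{v : V | a ⬝ᵥ v = s ∧ c ⬝ᵥ v = t} = #{v : V | a ⬝ᵥ v = 0 ∧ c ⬝ᵥ v = t} :=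
  card_equiv (Equiv.subRight (s • ⟨w, hw⟩)) fun v => by
    simp [dotProduct_sub, dotProduct_smul, hwa, hwc, sub_eq_zero]

theorem incNN_expandPlan_apply (V : Submodule F (Fin m → F)) [DecidablePred (· ∈ V)]
    (α β : F) : incNN (expandPlan B V) a c α β =
      ∑ j, #{x : V × Fin k | a ⬝ᵥ x.1 + a ⬝ᵥ B j x.2 = α ∧ c ⬝ᵥ x.1 + c ⬝ᵥ B j x.2 = β} := by
  simp only [← dotProduct_add, incNN, card_filter, Fintype.sum_prod_type]
  rfl

theorem incBlk_expandPlan_apply (V : Submodule F (Fin m → F)) [DecidablePred (· ∈ V)]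
    (α : F) (j : J) (v : V) :
    incBlk (expandPlan B V) a α (j, v) = #{u | a ⬝ᵥ v + a ⬝ᵥ B j u = α} := by
  simp only [← dotProduct_add]
  rfl

theorem isOTB_expandPlan_of_exists {V : Submodule F (Fin m → F)} [DecidablePred (· ∈ V)]
    {w : Fin m → F} (hw : w ∈ V) (hwa : a ⬝ᵥ w = 1) (hwc : c ⬝ᵥ w = 0) :
    IsOTB (expandPlan B V) a c := by
  ext α β
  simp only [Matrix.smul_apply, mul_apply, transpose_apply, Fintype.sum_prod_type,
    incNN_expandPlan_apply, incBlk_expandPlan_apply, smul_eq_mul, mul_sum]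
  refine sum_congr rfl fun j _ => ?_
  simpa only [Fintype.card_fin] using
    card_mul_card_filter_add_eq_sum_card_mul_card (fun v : V => a ⬝ᵥ v) (fun v : V => c ⬝ᵥ v)
      (fun u => a ⬝ᵥ B j u) (fun u => c ⬝ᵥ B j u)
      (card_dotProduct_levels_eq_card_zero_level hw hwa hwc) α β

end Expansion

section EffectClasses

variable {m : ℕ} {F : Type*} [Field F] {V : Submodule F (Fin m → F)} {a c : Fin m → F}

theorem exists_dotProduct_eq_one_of_notMem_span_sup_dotPerp
    (h : a ∉ Submodule.span F {c} ⊔ dotPerp V) :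
    ∃ w ∈ V, a ⬝ᵥ w = 1 ∧ c ⬝ᵥ w = 0 := by
  by_contra! hw
  let dotOn (x : Fin m → F) : V →ₗ[F] F := (dotProductBilin F F x).domRestrict V
  have hker : ⨅ _ : Unit, LinearMap.ker (dotOn c) ≤ LinearMap.ker (dotOn a) := by
    rintro ⟨v, hv⟩ hcv
    simp only [Submodule.mem_iInf, LinearMap.mem_ker, forall_const] at hcv ⊢
    change c ⬝ᵥ v = 0 at hcv
    change a ⬝ᵥ v = 0
    by_contra hav
    exact hw _ (V.smul_mem (a ⬝ᵥ v)⁻¹ hv)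
      (by rw [dotProduct_smul, smul_eq_mul, inv_mul_cancel₀ hav])
      (by rw [dotProduct_smul, hcv, smul_zero])
  obtain ⟨l, hl⟩ := Submodule.mem_span_singleton.1 (by
    simpa [Set.range_const] using mem_span_of_iInf_ker_le_ker hker)
  refine h (Submodule.mem_sup.2
    ⟨l • c, Submodule.smul_mem _ _ (Submodule.mem_span_singleton_self c), a - l • c,
      fun v hv => ?_, add_sub_cancel _ _⟩)
  have hlv := LinearMap.congr_fun hl ⟨v, hv⟩
  simp only [LinearMap.smul_apply, dotOn, LinearMap.domRestrict_apply, dotProductBilin_apply_apply,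
    smul_eq_mul] at hlv
  change (a - l • c) ⬝ᵥ v = 0
  rw [sub_dotProduct, smul_dotProduct, smul_eq_mul, hlv, sub_self]

end EffectClasses

theorem otb_expandPlan_of_ne_classes_general {m k b : ℕ} {F : Type*} [Field F] [Fintype F]
    [DecidableEq F] (B : Fin b → Fin k → (Fin m → F)) (V : Submodule F (Fin m → F))
    [DecidablePred (· ∈ V)] (a c : Fin m → F)
    (hac : Submodule.span F {a} ⊔ dotPerp V ≠ Submodule.span F {c} ⊔ dotPerp V) :
    k • incNN (expandPlan B V) a c =
      incBlk (expandPlan B V) a * (incBlk (expandPlan B V) c)ᵀ := by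
  have hle {x y : Fin m → F} (h : x ∈ Submodule.span F {y} ⊔ dotPerp V) :
      Submodule.span F {x} ⊔ dotPerp V ≤ Submodule.span F {y} ⊔ dotPerp V :=
    sup_le ((Submodule.span_singleton_le_iff_mem _ _).2 h) le_sup_right
  by_cases ha : a ∈ Submodule.span F {c} ⊔ dotPerp V
  · have hc : c ∉ Submodule.span F {a} ⊔ dotPerp V := fun hc =>
      hac (le_antisymm (hle ha) (hle hc))
    obtain ⟨w, hw, hwc, hwa⟩ := exists_dotProduct_eq_one_of_notMem_span_sup_dotPerp hc
    exact (isOTB_expandPlan_of_exists hw hwc hwa).symm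
  · obtain ⟨w, hw, hwa, hwc⟩ := exists_dotProduct_eq_one_of_notMem_span_sup_dotPerp ha
    exact isOTB_expandPlan_of_exists hw hwa hwc

/-- If the nonzero effects `E_a` and `E_c` lie in different effect classes relative to `V`
(i.e. `span{a} + V^⊥ ≠ span{c} + V^⊥`), then they are orthogonal through the block factor
in the expansion `V(B)`: `k·Ñ^{ac} = L̃^a·(L̃^c)ᵀ`. -/
theorem otb_expandPlan_of_ne_classes {m k b : ℕ} {F : Type*} [Field F] [Fintype F]
    [DecidableEq F] (B : Fin b → Fin k → (Fin m → F)) (V : Submodule F (Fin m → F))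
    [DecidablePred (· ∈ V)] (a c : Fin m → F) (ha : a ≠ 0) (hc : c ≠ 0)
    (hac : Submodule.span F {a} ⊔ dotPerp V ≠ Submodule.span F {c} ⊔ dotPerp V) :
    k • incNN (expandPlan B V) a c =
      incBlk (expandPlan B V) a * (incBlk (expandPlan B V) c)ᵀ :=
  otb_expandPlan_of_ne_classes_general B V a c hac
end

section
/- Let B be a blocked plan for an s^m experiment with b blocks of size k over F, let V be a vector subspace of F^m of dimension t, and let a, b ∈ F^m be nonzero vectors with a ∈ V^⊥ and b ∈ V^⊥. Then in the expansion V(B): Ñ^{ab} = s^t · N^{ab} and L̃^a·(L̃^b)ᵀ = s^t · L^a·(L^b)ᵀ; consequently, E_a and E_b are orthogonal through the block factor in V(B) (k·Ñ^{ab} = L̃^a·(L̃^b)ᵀ) if and only if they are orthogonal through the block factor in B (k·N^{ab} = L^a·(L^b)ᵀ). -/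
open Matrix

/-- If `a, c` are nonzero vectors of `V^⊥`, then `Ñ^{ac} = s^t·N^{ac}` and
`L̃^a·(L̃^c)ᵀ = s^t·L^a·(L^c)ᵀ`; consequently `E_a ⊥ E_c (bl)` holds in the expansion
`V(B)` if and only if it holds in `B`. -/
theorem expandPlan_of_mem_perp {m k b s t : ℕ} {F : Type*} [Field F] [Fintype F]
    [DecidableEq F] (hs : Fintype.card F = s)
    (B : Fin b → Fin k → (Fin m → F)) (V : Submodule F (Fin m → F))
    [DecidablePred (· ∈ V)] (ht : Module.finrank F V = t)
    (a c : Fin m → F) (ha : a ≠ 0) (hc : c ≠ 0)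
    (haV : a ∈ dotPerp V) (hcV : c ∈ dotPerp V) :
    incNN (expandPlan B V) a c = s ^ t • incNN B a c ∧
    incBlk (expandPlan B V) a * (incBlk (expandPlan B V) c)ᵀ =
      s ^ t • (incBlk B a * (incBlk B c)ᵀ) ∧
    (k • incNN (expandPlan B V) a c =
        incBlk (expandPlan B V) a * (incBlk (expandPlan B V) c)ᵀ ↔
      k • incNN B a c = incBlk B a * (incBlk B c)ᵀ) := by
  classical
  have key : ∀ (d : Fin m → F), d ∈ dotPerp V → ∀ (v : V) (x : Fin m → F),
      (∑ i, d i * ((v : Fin m → F) + x) i) = ∑ i, d i * x i := by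
    intro d hd v x
    simp only [Pi.add_apply, mul_add, Finset.sum_add_distrib, hd (v : Fin m → F) v.2, zero_add]
  have cardV : Fintype.card V = s ^ t := by
    rw [← hs, ← ht]; exact Module.card_eq_pow_finrank
  have hsne : s ^ t ≠ 0 := by
    rw [← cardV]; exact Fintype.card_ne_zero
  have hN : incNN (expandPlan B V) a c = s ^ t • incNN B a c := by
    ext α β
    simp only [incNN, Matrix.smul_apply, smul_eq_mul, Finset.card_filter]
    rw [Fintype.sum_prod_type, Fintype.sum_prod_type, ← cardV]
    have : ∀ (j : Fin b) (v : V) (u : Fin k),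
        (if (∑ i, a i * expandPlan B V (j, v) u i) = α ∧
            (∑ i, c i * expandPlan B V (j, v) u i) = β then 1 else 0)
          = (if (∑ i, a i * B j u i) = α ∧ (∑ i, c i * B j u i) = β then (1 : ℕ) else 0) := by
      intro j v u
      simp only [expandPlan, key a haV v (B j u), key c hcV v (B j u)]
    simp only [this]
    rw [Fintype.sum_prod_type]
    simp only [Finset.sum_const, Finset.card_univ, smul_eq_mul]
    rw [← Finset.mul_sum]
  have hLe : ∀ (d : Fin m → F), d ∈ dotPerp V → ∀ (α : F) (jv : Fin b × V),
      incBlk (expandPlan B V) d α jv = incBlk B d α jv.1 := by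
    intro d hd α jv
    simp only [incBlk]
    congr 1
    apply Finset.filter_congr
    intro u _
    simp only [expandPlan, key d hd jv.2 (B jv.1 u)]
  have hL : incBlk (expandPlan B V) a * (incBlk (expandPlan B V) c)ᵀ =
      s ^ t • (incBlk B a * (incBlk B c)ᵀ) := by
    ext α β
    simp only [Matrix.mul_apply, Matrix.transpose_apply, Matrix.smul_apply, smul_eq_mul]
    rw [← cardV]
    calc ∑ jv : Fin b × V, incBlk (expandPlan B V) a α jv * incBlk (expandPlan B V) c β jv
        = ∑ jv : Fin b × V, incBlk B a α jv.1 * incBlk B c β jv.1 := by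
          refine Finset.sum_congr rfl fun jv _ => ?_
          rw [hLe a haV, hLe c hcV]
      _ = ∑ j : Fin b, ∑ _v : V, incBlk B a α j * incBlk B c β j := by
          rw [Fintype.sum_prod_type]
      _ = Fintype.card V * ∑ j : Fin b, incBlk B a α j * incBlk B c β j := by
          simp only [Finset.sum_const, Finset.card_univ, smul_eq_mul]
          rw [← Finset.mul_sum]
  refine ⟨hN, hL, ?_⟩
  rw [hN, hL, smul_comm]
  have hinj : Function.Injective (fun M : Matrix F F ℕ => s ^ t • M) :=
    fun M N h => by
      ext α β
      have := congrFun (congrFun h α) β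
      simp only [Matrix.smul_apply, smul_eq_mul] at this
      exact Nat.eq_of_mul_eq_mul_left (Nat.pos_of_ne_zero hsne) this
  exact ⟨fun h => hinj h, fun h => by rw [h]⟩
end

section
/- Let B be a blocked plan for an s^m experiment with b blocks of size k over F, let V be a nontrivial vector subspace of F^m (V ≠ {0}), and let a, b ∈ F^m with a ∉ V^⊥ and b ∉ V^⊥. Suppose there exists c ∈ F with c ≠ 0 and c ≠ 1 such that a − c·b ∈ V^⊥, and suppose every diagonal entry of N^{ab} is positive (n^{ab}_{γ,γ} > 0 for all γ ∈ F, which holds in particular when E_a is aliased with E_b in B). Then every entry of the incidence matrix Ñ^{ab} of the expansion V(B) is positive; in particular E_a and E_b are not aliased in V(B). -/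
open Matrix

/-
Write `x ↦ a·x` for the level of `E_a`. Since `c ∉ V^⊥`, the functional `v ↦ c·v` maps `V`
onto `F`, and on `V` we have `a·v = γ (c·v)`. Shifting a run `x` of `B` by `v ∈ V` therefore
moves its pair of levels from `(a·x, c·x)` to `(a·x + γt, c·x + t)` with `t = c·v` arbitrary.
Starting from a run at the diagonal cell `(δ, δ)` with `δ = (γβ - α)/(γ - 1)` and taking
`t = β - δ` reaches the cell `(α, β)`.
-/

theorem exists_mem_dotProduct_eq {m : ℕ} {F : Type*} [Field F] {V : Submodule F (Fin m → F)}
    {c : Fin m → F} (hcV : c ∉ dotPerp V) (t : F) : ∃ v ∈ V, c ⬝ᵥ v = t := by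
  obtain ⟨v₀, hv₀V, hcv₀⟩ : ∃ v₀ ∈ V, c ⬝ᵥ v₀ ≠ 0 := by
    by_contra! h
    exact hcV h
  refine ⟨(t / c ⬝ᵥ v₀) • v₀, V.smul_mem _ hv₀V, ?_⟩
  rw [dotProduct_smul, smul_eq_mul, div_mul_cancel₀ _ hcv₀]

theorem dotProduct_eq_mul_of_sub_smul_mem_dotPerp {m : ℕ} {F : Type*} [Field F]
    {V : Submodule F (Fin m → F)} {a c v : Fin m → F} {γ : F} (hac : a - γ • c ∈ dotPerp V)
    (hv : v ∈ V) : a ⬝ᵥ v = γ * c ⬝ᵥ v := by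
  have h : (a - γ • c) ⬝ᵥ v = 0 := hac v hv
  rwa [sub_dotProduct, smul_dotProduct, smul_eq_mul, sub_eq_zero] at h

theorem incNN_le_incNN_expandPlan {m k : ℕ} {F : Type*} [Field F] [Fintype F] [DecidableEq F]
    {J : Type*} [Fintype J] (B : J → Fin k → (Fin m → F)) (V : Submodule F (Fin m → F))
    [DecidablePred (· ∈ V)] (a c : Fin m → F) {v : Fin m → F} (hv : v ∈ V) (α β : F) :
    incNN B a c α β ≤ incNN (expandPlan B V) a c (a ⬝ᵥ v + α) (c ⬝ᵥ v + β) := by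
  refine Finset.card_le_card_of_injOn (fun ju => ((ju.1, ⟨v, hv⟩), ju.2)) ?_ ?_
  · rintro ⟨j, u⟩ hju
    simp only [Finset.coe_filter, Finset.mem_univ, true_and, Set.mem_ofPred_eq] at hju ⊢
    change a ⬝ᵥ (v + B j u) = _ ∧ c ⬝ᵥ (v + B j u) = _
    rw [dotProduct_add, dotProduct_add]
    exact ⟨congrArg _ hju.1, congrArg _ hju.2⟩
  · rintro ⟨j, u⟩ - ⟨j', u'⟩ - h
    simp only [Prod.mk.injEq] at h
    simp [h.1.1, h.2]

theorem incNN_expandPlan_pos_general {m k b : ℕ} {F : Type*} [Field F] [Fintype F]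
    [DecidableEq F] (B : Fin b → Fin k → (Fin m → F)) (V : Submodule F (Fin m → F))
    [DecidablePred (· ∈ V)]
    (a c : Fin m → F) (hcV : c ∉ dotPerp V)
    (γ : F) (hγ1 : γ ≠ 1) (hac : a - γ • c ∈ dotPerp V)
    (hdiag : ∀ δ : F, 0 < incNN B a c δ δ) :
    ∀ α β : F, 0 < incNN (expandPlan B V) a c α β := by
  intro α β
  set δ : F := (γ * β - α) / (γ - 1) with hδ
  obtain ⟨v, hvV, hcv⟩ := exists_mem_dotProduct_eq hcV (β - δ)
  have hav : a ⬝ᵥ v + δ = α := by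
    have hγ1' : γ - 1 ≠ 0 := sub_ne_zero.mpr hγ1
    rw [dotProduct_eq_mul_of_sub_smul_mem_dotPerp hac hvV, hcv, hδ]
    field_simp
    ring
  have hcv' : c ⬝ᵥ v + δ = β := by rw [hcv, sub_add_cancel]
  calc 0 < incNN B a c δ δ := hdiag δ
    _ ≤ incNN (expandPlan B V) a c α β :=
      hav ▸ hcv' ▸ incNN_le_incNN_expandPlan B V a c hvV δ δ

/-- Suppose `V ≠ {0}`, `a ∉ V^⊥`, `c ∉ V^⊥`, and some `γ ∈ F` with `γ ≠ 0`, `γ ≠ 1`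
satisfies `a − γ·c ∈ V^⊥`. If every diagonal entry of `N^{ac}` is positive (as happens
when `E_a` and `E_c` are aliased in `B`), then every entry of the incidence matrix
`Ñ^{ac}` of the expansion `V(B)` is positive; in particular `E_a` and `E_c` are not
aliased in `V(B)`. -/
theorem incNN_expandPlan_pos {m k b : ℕ} {F : Type*} [Field F] [Fintype F]
    [DecidableEq F] (B : Fin b → Fin k → (Fin m → F)) (V : Submodule F (Fin m → F))
    [DecidablePred (· ∈ V)] (hV : V ≠ ⊥)
    (a c : Fin m → F) (haV : a ∉ dotPerp V) (hcV : c ∉ dotPerp V)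
    (γ : F) (hγ0 : γ ≠ 0) (hγ1 : γ ≠ 1) (hac : a - γ • c ∈ dotPerp V)
    (hdiag : ∀ δ : F, 0 < incNN B a c δ δ) :
    ∀ α β : F, 0 < incNN (expandPlan B V) a c α β :=
  incNN_expandPlan_pos_general B V a c hcV γ hγ1 hac hdiag
end
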